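/- arXiv:2211.12489 — 8 statements merged into one kernel-verified Lean document; each statement's English description precedes it below -/
import Mathlib

section
/- Let L ≥ 1, let 0 < ε < 1 and 0 < δ < 1, and let α : Fin L → ℂ satisfy ∑_j |α_j|² = 1. Let k be a natural number with k ≥ ((5+√21)/(3ε²))·ln(2L/δ). Then, under the k-fold product of the computational-basis measurement distribution (the probability measure on Fin L assigning probability |α_j|² to outcome j), the probability of the event {ω : Fin k → Fin L | for every j, | √(#{i : ω i = j}/k) − |α_j| | ≤ ε} is at least 1 − δ. In other words, k computational-basis measurements suffice to learn an ε-ℓ∞ estimate of the vector of amplitude magnitudes |α| with success probability at least 1 − δ. -/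
/-!
The number of times outcome `j` is seen in `k` measurements is a binomial count with mean
`k |α_j|²`, and its moment generating function is `(1 + |α_j|² (eᵗ - 1))ᵏ ≤ exp (k |α_j|² (eᵗ - 1))`.
The estimate of `|α_j|` misses by more than `ε` only if the count leaves the interval
`[k (|α_j| - ε)², k (|α_j| + ε)²]`, and the Chernoff bound with the parameters `t = ε / (|α_j| + ε)`
and `t = -ε / |α_j|` bounds each of these two tails by `exp (-k ε² / 2)`. A union bound over the
`L` outcomes leaves a failure probability of at most `2 L exp (-k ε² / 2)`, which is at most `δ`
because `(5 + √21) / 3 ≥ 2`.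
-/

open MeasureTheory ProbabilityTheory Finset Real

lemma exp_neg_le_one_sub_add_sq_div_two {u : ℝ} (hu : 0 ≤ u) :
    exp (-u) ≤ 1 - u + u ^ 2 / 2 := by
  have hq := quadratic_le_exp_of_nonneg hu
  rw [exp_neg, inv_le_iff_one_le_mul₀ (exp_pos u)]
  nlinarith [pow_nonneg hu 4, exp_pos u]

lemma sq_mul_exp_sub_one_sub_le {a ε : ℝ} (ha : 0 ≤ a) (hε : 0 < ε) :
    a ^ 2 * (exp (ε / (a + ε)) - 1) - ε / (a + ε) * (a + ε) ^ 2 ≤ -(ε ^ 2 / 2) := by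
  have hq : 0 < a + ε := by linarith
  set t := ε / (a + ε) with ht
  have ht1 : t ≤ 1 := by rw [ht, div_le_one hq]; linarith
  have hexp : exp t ≤ 1 + t + t ^ 2 := by
    have := abs_exp_sub_one_sub_id_le (abs_le.mpr ⟨by linarith [div_nonneg hε.le hq.le], ht1⟩)
    linarith [le_abs_self (exp t - 1 - t)]
  calc a ^ 2 * (exp t - 1) - t * (a + ε) ^ 2 ≤ a ^ 2 * (t + t ^ 2) - t * (a + ε) ^ 2 := by
        gcongr; linarith
    _ = -(ε ^ 2 * (a ^ 2 + 3 * a * ε + ε ^ 2) / (a + ε) ^ 2) := by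
        rw [ht]; field_simp; ring
    _ ≤ -(ε ^ 2 / 2) := by
        rw [neg_le_neg_iff, le_div_iff₀ (by positivity)]
        nlinarith [mul_nonneg ha hε.le, sq_nonneg ε]

lemma sq_mul_exp_neg_sub_one_add_le {a ε : ℝ} (hε : 0 < ε) (hεa : ε < a) :
    a ^ 2 * (exp (-(ε / a)) - 1) + ε / a * (a - ε) ^ 2 ≤ -(ε ^ 2 / 2) := by
  have ha : 0 < a := hε.trans hεa
  have hexp := exp_neg_le_one_sub_add_sq_div_two (div_nonneg hε.le ha.le)
  calc a ^ 2 * (exp (-(ε / a)) - 1) + ε / a * (a - ε) ^ 2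
      ≤ a ^ 2 * (-(ε / a) + (ε / a) ^ 2 / 2) + ε / a * (a - ε) ^ 2 := by
        nlinarith [mul_le_mul_of_nonneg_left (sub_le_sub_right hexp 1) (sq_nonneg a)]
    _ = -(3 * ε ^ 2 / 2) + ε * (ε ^ 2 / a) := by field_simp; ring
    _ ≤ -(ε ^ 2 / 2) := by
        have : ε ^ 2 / a ≤ ε := by rw [div_le_iff₀ ha]; nlinarith
        nlinarith

lemma le_or_le_of_lt_abs_sqrt_div_sub {c K a ε : ℝ} (hc : 0 ≤ c) (hcK : c ≤ K) (ha : 0 ≤ a)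
    (hε : 0 ≤ ε) (h : ε < |√(c / K) - a|) :
    K * (a + ε) ^ 2 ≤ c ∨ ε < a ∧ c ≤ K * (a - ε) ^ 2 := by
  rcases (hc.trans hcK).eq_or_lt with rfl | hK
  · obtain rfl : c = 0 := le_antisymm hcK hc
    simp only [div_zero, sqrt_zero, zero_sub, abs_neg, abs_of_nonneg ha] at h
    simp [h]
  have hs := sqrt_nonneg (c / K)
  rcases lt_abs.mp h with h | h
  · left
    rw [← le_div_iff₀' hK, ← sq_sqrt (div_nonneg hc hK.le)]
    gcongr
    linarith
  · right
    refine ⟨by linarith, ?_⟩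
    rw [← div_le_iff₀' hK, ← sq_sqrt (div_nonneg hc hK.le)]
    gcongr
    linarith

lemma mul_exp_neg_le_of_log_div_le {c δ x : ℝ} (hc : 0 ≤ c) (hδ : 0 < δ)
    (h : log (c / δ) ≤ x) : c * exp (-x) ≤ δ := by
  rcases hc.eq_or_lt with rfl | hc
  · simpa using hδ.le
  calc c * exp (-x) ≤ c * exp (-log (c / δ)) := by gcongr
    _ = δ := by rw [exp_neg, exp_log (by positivity), inv_div]; field_simp

lemma log_le_mul_sq_div_two {C ε ℓ k : ℝ} (hC : 2 ≤ C) (hε : 0 < ε) (hk : 0 ≤ k)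
    (h : C / ε ^ 2 * ℓ ≤ k) : ℓ ≤ k * ε ^ 2 / 2 := by
  rcases le_or_gt ℓ 0 with hℓ | hℓ
  · have : 0 ≤ k * ε ^ 2 / 2 := by positivity
    linarith
  rw [div_mul_eq_mul_div, div_le_iff₀ (by positivity)] at h
  nlinarith

section DiracSum

variable {ι : Type*} [Fintype ι] [MeasurableSpace ι] {w : ι → ℝ}

lemma isProbabilityMeasure_sum_smul_dirac (hw0 : ∀ i, 0 ≤ w i) (hw1 : ∑ i, w i = 1) :
    IsProbabilityMeasure (∑ i, ENNReal.ofReal (w i) • Measure.dirac i) := by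
  constructor
  simp [← ENNReal.ofReal_sum_of_nonneg fun i _ => hw0 i, hw1]

variable [MeasurableSingletonClass ι]

lemma sum_smul_dirac_singleton (w : ι → ℝ) (x : ι) :
    (∑ i, ENNReal.ofReal (w i) • Measure.dirac i) {x} = ENNReal.ofReal (w x) := by
  classical
  simp [Measure.dirac_apply' _ (measurableSet_singleton x), Set.indicator_apply]

lemma measureReal_sum_smul_dirac_singleton (hw0 : ∀ i, 0 ≤ w i) (x : ι) :
    (∑ i, ENNReal.ofReal (w i) • Measure.dirac i).real {x} = w x := by
  rw [measureReal_def, sum_smul_dirac_singleton, ENNReal.toReal_ofReal (hw0 x)]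

end DiracSum

section Counting

variable {α : Type*} [DecidableEq α]

lemma card_filter_eq_sum_indicator (j : α) (k : ℕ) :
    (fun ω : Fin k → α => (#{i | ω i = j} : ℝ))
      = ∑ i, fun ω => ({j} : Set α).indicator 1 (ω i) := by
  ext ω; simp [Finset.sum_apply, Set.indicator_apply]

variable [MeasurableSpace α] [MeasurableSingletonClass α]

lemma measurable_card_filter (j : α) (k : ℕ) :
    Measurable fun ω : Fin k → α => (#{i | ω i = j} : ℝ) := by
  rw [card_filter_eq_sum_indicator]
  have hind : Measurable (({j} : Set α).indicator (1 : α → ℝ)) :=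
    measurable_one.indicator (measurableSet_singleton j)
  fun_prop

variable (μ : Measure α) [IsProbabilityMeasure μ] (j : α) (k : ℕ)

lemma mgf_indicator_singleton (t : ℝ) :
    mgf (({j} : Set α).indicator 1) μ t = 1 + μ.real {j} * (exp t - 1) := by
  have h : (fun x => exp (t * ({j} : Set α).indicator 1 x))
      = fun x => ({j} : Set α).indicator (fun _ => exp t - 1) x + 1 := by
    ext x; by_cases hx : x = j <;> simp [hx]
  rw [mgf, h, integral_add (integrable_const _ |>.indicator (measurableSet_singleton j))
    (integrable_const _), integral_indicator_const _ (measurableSet_singleton j)]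
  simp [add_comm]

lemma mgf_card_filter_eq (t : ℝ) :
    mgf (fun ω : Fin k → α => (#{i | ω i = j} : ℝ)) (Measure.pi fun _ => μ) t
      = (1 + μ.real {j} * (exp t - 1)) ^ k := by
  have hind : Measurable (({j} : Set α).indicator (1 : α → ℝ)) :=
    measurable_one.indicator (measurableSet_singleton j)
  have hcoord : ∀ i, mgf (fun ω : Fin k → α => ({j} : Set α).indicator 1 (ω i))
      (Measure.pi fun _ => μ) t = mgf (({j} : Set α).indicator 1) μ t := fun i => by
    rw [mgf, mgf]
    conv_rhs => rw [← (measurePreserving_eval (fun _ : Fin k => μ) i).map_eq]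
    rw [integral_map (measurable_pi_apply i).aemeasurable (by fun_prop)]
  rw [card_filter_eq_sum_indicator, (iIndepFun_pi (fun _ => hind.aemeasurable)).mgf_sum
    (fun i => hind.comp (measurable_pi_apply i))]
  simp only [hcoord, mgf_indicator_singleton, prod_const, card_univ, Fintype.card_fin]

lemma mgf_card_filter_le (t : ℝ) :
    mgf (fun ω : Fin k → α => (#{i | ω i = j} : ℝ)) (Measure.pi fun _ => μ) t
      ≤ exp (k * μ.real {j} * (exp t - 1)) := by
  have hp : μ.real {j} ≤ 1 := measureReal_le_one
  rw [mgf_card_filter_eq, mul_assoc, exp_nat_mul]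
  refine pow_le_pow_left₀ ?_ ((add_comm _ _).trans_le (add_one_le_exp _)) k
  nlinarith [exp_pos t, measureReal_nonneg (μ := μ) (s := {j})]

lemma integrable_exp_mul_card_filter (t : ℝ) :
    Integrable (fun ω : Fin k → α => exp (t * #{i | ω i = j})) (Measure.pi fun _ => μ) := by
  refine Integrable.of_bound ((measurable_card_filter j k).const_mul t).exp.aestronglyMeasurable
    (exp (|t| * k)) (ae_of_all _ fun ω => ?_)
  have hcard : (#{i | ω i = j} : ℝ) ≤ k := by
    exact_mod_cast (card_filter_le _ _).trans_eq (card_fin k)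
  rw [norm_of_nonneg (exp_pos _).le, exp_le_exp]
  calc t * #{i | ω i = j} ≤ |t| * #{i | ω i = j} := by gcongr; exact le_abs_self t
    _ ≤ |t| * k := by gcongr

lemma measureReal_le_card_filter_le {t : ℝ} (ht : 0 ≤ t) (m : ℝ) :
    (Measure.pi fun _ : Fin k => μ).real {ω | m ≤ (#{i | ω i = j} : ℝ)}
      ≤ exp (k * μ.real {j} * (exp t - 1) - t * m) := by
  refine (measure_ge_le_exp_mul_mgf m ht (integrable_exp_mul_card_filter μ j k t)).trans ?_
  rw [sub_eq_neg_add, exp_add, ← neg_mul]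
  gcongr
  exact mgf_card_filter_le μ j k t

lemma measureReal_card_filter_le_le {t : ℝ} (ht : t ≤ 0) (m : ℝ) :
    (Measure.pi fun _ : Fin k => μ).real {ω | (#{i | ω i = j} : ℝ) ≤ m}
      ≤ exp (k * μ.real {j} * (exp t - 1) - t * m) := by
  refine (measure_le_le_exp_mul_mgf m ht (integrable_exp_mul_card_filter μ j k t)).trans ?_
  rw [sub_eq_neg_add, exp_add, ← neg_mul]
  gcongr
  exact mgf_card_filter_le μ j k t

lemma measureReal_upper_tail_le {ε : ℝ} (hε : 0 < ε) :
    (Measure.pi fun _ : Fin k => μ).real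
        {ω | k * (√(μ.real {j}) + ε) ^ 2 ≤ (#{i | ω i = j} : ℝ)}
      ≤ exp (-(k * ε ^ 2 / 2)) := by
  have hexp := sq_mul_exp_sub_one_sub_le (sqrt_nonneg (μ.real {j})) hε
  rw [sq_sqrt measureReal_nonneg] at hexp
  refine (measureReal_le_card_filter_le μ j k (t := ε / (√(μ.real {j}) + ε)) (by positivity)
    _).trans (exp_le_exp.mpr ?_)
  linarith [mul_le_mul_of_nonneg_left hexp (Nat.cast_nonneg (α := ℝ) k)]

lemma measureReal_lower_tail_le {ε : ℝ} (hε : 0 < ε) (hεa : ε < √(μ.real {j})) :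
    (Measure.pi fun _ : Fin k => μ).real
        {ω | (#{i | ω i = j} : ℝ) ≤ k * (√(μ.real {j}) - ε) ^ 2}
      ≤ exp (-(k * ε ^ 2 / 2)) := by
  have hexp := sq_mul_exp_neg_sub_one_add_le hε hεa
  rw [sq_sqrt measureReal_nonneg] at hexp
  have ht : 0 ≤ ε / √(μ.real {j}) := div_nonneg hε.le (hε.trans hεa).le
  refine (measureReal_card_filter_le_le μ j k (t := -(ε / √(μ.real {j}))) (by linarith)
    _).trans (exp_le_exp.mpr ?_)
  linarith [mul_le_mul_of_nonneg_left hexp (Nat.cast_nonneg (α := ℝ) k)]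

lemma measureReal_lt_abs_sqrt_freq_sub_le {ε : ℝ} (hε : 0 < ε) :
    (Measure.pi fun _ : Fin k => μ).real
        {ω | ε < |√((#{i | ω i = j} : ℝ) / k) - √(μ.real {j})|}
      ≤ 2 * exp (-(k * ε ^ 2 / 2)) := by
  set P := Measure.pi fun _ : Fin k => μ
  set a := √(μ.real {j})
  have hlower : P.real {ω | ε < a ∧ (#{i | ω i = j} : ℝ) ≤ k * (a - ε) ^ 2}
      ≤ exp (-(k * ε ^ 2 / 2)) := by
    by_cases hεa : ε < a
    · simpa only [hεa, true_and] using measureReal_lower_tail_le μ j k hε hεa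
    · simp only [hεa, false_and, Set.ofPred_false, measureReal_empty]
      positivity
  calc P.real {ω | ε < |√((#{i | ω i = j} : ℝ) / k) - a|}
      ≤ P.real ({ω | k * (a + ε) ^ 2 ≤ (#{i | ω i = j} : ℝ)}
          ∪ {ω | ε < a ∧ (#{i | ω i = j} : ℝ) ≤ k * (a - ε) ^ 2}) := by
        refine measureReal_mono (fun ω hω => ?_)
        exact le_or_le_of_lt_abs_sqrt_div_sub (Nat.cast_nonneg _)
          (by exact_mod_cast (card_filter_le _ _).trans_eq (card_fin k)) (sqrt_nonneg _) hε.le hω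
    _ ≤ 2 * exp (-(k * ε ^ 2 / 2)) := by
        linarith [measureReal_union_le (μ := P) {ω | k * (a + ε) ^ 2 ≤ (#{i | ω i = j} : ℝ)}
          {ω | ε < a ∧ (#{i | ω i = j} : ℝ) ≤ k * (a - ε) ^ 2}, measureReal_upper_tail_le μ j k hε]

end Counting

lemma ofReal_one_sub_le_measure_setOf_forall {Ω ι : Type*} [MeasurableSpace Ω] [Fintype ι]
    (P : Measure Ω) [IsProbabilityMeasure P] {p : ι → Ω → Prop} {b : ℝ}
    (hb : ∀ i, P.real {ω | ¬ p i ω} ≤ b) :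
    ENNReal.ofReal (1 - Fintype.card ι * b) ≤ P {ω | ∀ i, p i ω} := by
  have hcompl : {ω | ∀ i, p i ω}ᶜ = ⋃ i, {ω | ¬ p i ω} := by ext; simp
  have hunion : 1 ≤ P.real {ω | ∀ i, p i ω} + P.real {ω | ∀ i, p i ω}ᶜ := by
    simpa using measureReal_union_le (μ := P) {ω | ∀ i, p i ω} {ω | ∀ i, p i ω}ᶜ
  have hfail : P.real {ω | ∀ i, p i ω}ᶜ ≤ Fintype.card ι * b := by
    rw [hcompl]
    refine (measureReal_iUnion_fintype_le _).trans ?_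
    simpa using Finset.sum_le_sum fun i (_ : i ∈ univ) => hb i
  rw [← ofReal_measureReal]
  exact ENNReal.ofReal_le_ofReal (by linarith)

theorem tomography_linfty_estimate_general
    (L : ℕ) (ε δ : ℝ) (hε0 : 0 < ε)
    (hδ0 : 0 < δ)
    (α : Fin L → ℂ) (hα : ∑ j, ‖α j‖ ^ 2 = 1)
    (k : ℕ) (hk : ((5 + Real.sqrt 21) / (3 * ε ^ 2)) * Real.log (2 * L / δ) ≤ k) :
    ENNReal.ofReal (1 - δ) ≤
      Measure.pi (fun _ : Fin k =>
          ∑ j : Fin L, ENNReal.ofReal (‖α j‖ ^ 2) • Measure.dirac j)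
        {ω : Fin k → Fin L | ∀ j : Fin L,
          |Real.sqrt (((Finset.univ.filter fun i => ω i = j).card : ℝ) / k)
            - ‖α j‖| ≤ ε} := by
  set μ := ∑ j : Fin L, ENNReal.ofReal (‖α j‖ ^ 2) • Measure.dirac j
  have hw0 : ∀ j, 0 ≤ ‖α j‖ ^ 2 := fun j => sq_nonneg _
  have : IsProbabilityMeasure μ := isProbabilityMeasure_sum_smul_dirac hw0 hα
  have hfail : ∀ j, (Measure.pi fun _ : Fin k => μ).real
      {ω | ¬ |√((#{i | ω i = j} : ℝ) / k) - ‖α j‖| ≤ ε} ≤ 2 * exp (-(k * ε ^ 2 / 2)) :=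
    fun j => by
      simpa only [not_le, μ, measureReal_sum_smul_dirac_singleton hw0, sqrt_sq (norm_nonneg _)]
        using measureReal_lt_abs_sqrt_freq_sub_le μ j k hε0
  have hsize : (Fintype.card (Fin L) : ℝ) * (2 * exp (-(k * ε ^ 2 / 2))) ≤ δ := by
    have hC : 2 ≤ (5 + √21) / 3 := by
      rw [le_div_iff₀ three_pos]
      linarith [one_le_sqrt.mpr (by norm_num : (1 : ℝ) ≤ 21)]
    rw [Fintype.card_fin, ← mul_assoc, mul_comm (L : ℝ) 2]
    refine mul_exp_neg_le_of_log_div_le (by positivity) hδ0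
      (log_le_mul_sq_div_two hC hε0 k.cast_nonneg ?_)
    rwa [div_div]
  calc ENNReal.ofReal (1 - δ)
      ≤ ENNReal.ofReal (1 - Fintype.card (Fin L) * (2 * exp (-(k * ε ^ 2 / 2)))) :=
        ENNReal.ofReal_le_ofReal (by linarith)
    _ ≤ _ := ofReal_one_sub_le_measure_setOf_forall _ hfail

/-- k computational-basis measurements suffice to learn an ε-ℓ∞ estimate of the
amplitude magnitudes of a pure state, with success probability at least 1 − δ. -/
theorem tomography_linfty_estimate
    (L : ℕ) (hL : 1 ≤ L) (ε δ : ℝ) (hε0 : 0 < ε) (hε1 : ε < 1)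
    (hδ0 : 0 < δ) (hδ1 : δ < 1)
    (α : Fin L → ℂ) (hα : ∑ j, ‖α j‖ ^ 2 = 1)
    (k : ℕ) (hk : ((5 + Real.sqrt 21) / (3 * ε ^ 2)) * Real.log (2 * L / δ) ≤ k) :
    ENNReal.ofReal (1 - δ) ≤
      Measure.pi (fun _ : Fin k =>
          ∑ j : Fin L, ENNReal.ofReal (‖α j‖ ^ 2) • Measure.dirac j)
        {ω : Fin k → Fin L | ∀ j : Fin L,
          |Real.sqrt (((Finset.univ.filter fun i => ω i = j).card : ℝ) / k)
            - ‖α j‖| ≤ ε} :=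
  tomography_linfty_estimate_general L ε δ hε0 hδ0 α hα k hk
end

section
/- Let q, q⁺, q⁻ be nonnegative real numbers, let z, w ∈ ℂ, and let ε' ≥ 0 and ε_tsp ≥ 0. Suppose |√q − |z|| ≤ ε'/3, |√(q⁺) − |z + w|/2| ≤ ε'/3, |√(q⁻) − |z − w|/2| ≤ ε'/3, and |w − √q| ≤ ε_tsp. Define ã = 0 if √q ≤ (2/3)·ε' + ε_tsp, and otherwise ã = max(−√q, min(√q, (q⁺ − q⁻)/√q)). Then |ã − Re(z)| ≤ ε' + ε_tsp + |Im(z)|. -/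
/-!
Write r = √q. By polarization, ‖z + r‖² − ‖z − r‖² = 4 r Re z, so (q⁺ − q⁻)/r estimates
Re z once w is replaced by r, at a cost of ‖w − r‖ in each norm. Squaring the bounds on √q⁺
and √q⁻ multiplies their errors by (‖z + r‖ + ‖z − r‖)/2 ≤ r + ε'/3 + |Im z|, and the
threshold r > 2ε'/3 + ε_tsp absorbs this into the bound. This only bounds (q⁺ − q⁻)/r − Re z
from above, and only when r − Re z exceeds the bound (so that the lower bound on √q⁻ is
nonnegative and can be squared); otherwise clipping at r does the job. Replacing z by −z
gives the other side.
-/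

namespace Complex

theorem norm_add_ofReal_sq_sub_norm_sub_ofReal_sq (z : ℂ) (r : ℝ) :
    ‖z + r‖ ^ 2 - ‖z - r‖ ^ 2 = 4 * r * z.re := by
  simp only [Complex.sq_norm, normSq_apply, add_re, sub_re, add_im, sub_im, ofReal_re, ofReal_im]
  ring

theorem norm_add_ofReal_add_norm_sub_ofReal_le {z : ℂ} {r R : ℝ} (hz : |z.re| ≤ R)
    (hr : |r| ≤ R) : ‖z + r‖ + ‖z - r‖ ≤ 2 * R + 2 * |z.im| := by
  have hadd := norm_le_abs_re_add_abs_im (z + r)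
  have hsub := norm_le_abs_re_add_abs_im (z - r)
  simp only [add_re, sub_re, add_im, sub_im, ofReal_re, ofReal_im, add_zero, sub_zero] at hadd hsub
  have : |z.re + r| + |z.re - r| ≤ 2 * R := by
    rw [abs_le] at hz hr
    cases abs_cases (z.re + r) <;> cases abs_cases (z.re - r) <;> linarith
  linarith

end Complex

theorem sq_sub_sq_div_le_re_add {z w : ℂ} {r ε t a b : ℝ} (hε : 0 ≤ ε) (ha : 0 ≤ a)
    (hz : ‖z‖ - r ≤ ε / 3) (hw : ‖w - r‖ ≤ t)
    (hza : a - ‖z + w‖ / 2 ≤ ε / 3) (hzb : ‖z - w‖ / 2 - b ≤ ε / 3)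
    (hr : 2 / 3 * ε + t < r) (hre : z.re + (ε + t + |z.im|) < r) :
    (a ^ 2 - b ^ 2) / r ≤ z.re + (ε + t + |z.im|) := by
  set U := ‖z + r‖ / 2 with hU
  set V := ‖z - r‖ / 2 with hV
  set E := ε / 3 + t / 2 with hE
  have ht : 0 ≤ t := (norm_nonneg _).trans hw
  have hr₀ : 0 < r := by linarith
  have haU : a ≤ U + E := by
    have := norm_add_le (z + r) (w - r)
    rw [add_add_sub_cancel] at this
    linarith [hU, hE]
  have hVb : V - E ≤ b := by
    have := norm_sub_le_norm_sub_add_norm_sub z w r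
    linarith [hV, hE]
  have hEV : E ≤ V := by
    have := (neg_le_abs _).trans (Complex.abs_re_le_norm (z - r))
    rw [Complex.sub_re, Complex.ofReal_re] at this
    linarith [abs_nonneg z.im]
  have hUV : U + V ≤ r + ε / 3 + |z.im| := by
    have hre : |z.re| ≤ r + ε / 3 := by linarith [Complex.abs_re_le_norm z]
    have := Complex.norm_add_ofReal_add_norm_sub_ofReal_le hre (by rw [abs_of_pos hr₀]; linarith)
    linarith [hU, hV]
  rw [div_le_iff₀ hr₀]
  calc a ^ 2 - b ^ 2 ≤ (U + E) ^ 2 - (V - E) ^ 2 := by gcongr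
    _ = (‖z + r‖ ^ 2 - ‖z - r‖ ^ 2) / 4 + 2 * E * (U + V) := by ring
    _ = r * z.re + (2 / 3 * ε + t) * (U + V) := by
        rw [Complex.norm_add_ofReal_sq_sub_norm_sub_ofReal_sq]; ring
    _ ≤ r * z.re + (2 / 3 * ε + t) * (r + ε / 3 + |z.im|) := by gcongr
    _ ≤ r * z.re + r * (ε / 3 + |z.im|) + (2 / 3 * ε + t) * r := by
        have := mul_le_mul_of_nonneg_right hr.le (by positivity : 0 ≤ ε / 3 + |z.im|)
        linarith
    _ = (z.re + (ε + t + |z.im|)) * r := by ring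

theorem abs_max_neg_min_sub_le {r s x B : ℝ} (hx : |x| ≤ r + B)
    (hup : r ≤ x + B ∨ s ≤ x + B) (hlo : r ≤ -x + B ∨ -s ≤ -x + B) :
    |max (-r) (min r s) - x| ≤ B := by
  rw [abs_le] at hx ⊢
  constructor
  · rcases hlo with h | h
    · linarith [le_max_left (-r) (min r s)]
    · have : x - B ≤ min r s := le_min (by linarith) (by linarith)
      linarith [le_max_right (-r) (min r s)]
  · rw [sub_le_iff_le_add', max_le_iff]
    refine ⟨by linarith, ?_⟩
    rcases hup with h | h
    · linarith [min_le_left r s]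
    · linarith [min_le_right r s]

theorem tomography_coordinate_bound_general
    (q qp qm : ℝ) (hqp : 0 ≤ qp) (hqm : 0 ≤ qm)
    (z w : ℂ) (ε' εtsp : ℝ) (hε' : 0 ≤ ε')
    (h1 : |Real.sqrt q - ‖z‖| ≤ ε' / 3)
    (h2 : |Real.sqrt qp - ‖z + w‖ / 2| ≤ ε' / 3)
    (h3 : |Real.sqrt qm - ‖z - w‖ / 2| ≤ ε' / 3)
    (h4 : ‖w - (Real.sqrt q : ℂ)‖ ≤ εtsp)
    (atil : ℝ)
    (hatil : atil =
      if Real.sqrt q ≤ 2 / 3 * ε' + εtsp then 0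
      else max (-Real.sqrt q) (min (Real.sqrt q) ((qp - qm) / Real.sqrt q))) :
    |atil - z.re| ≤ ε' + εtsp + |z.im| := by
  have htsp : 0 ≤ εtsp := (norm_nonneg _).trans h4
  have hz := (abs_sub_le_iff.1 h1).2
  have hre : |z.re| ≤ √q + ε' / 3 := by linarith [Complex.abs_re_le_norm z]
  have him := abs_nonneg z.im
  subst hatil
  split_ifs with hsmall
  · rw [zero_sub, abs_neg]
    linarith
  push Not at hsmall
  refine abs_max_neg_min_sub_le (by linarith) ?_ ?_
  · refine (le_or_gt _ _).imp_right fun h => ?_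
    simpa only [Real.sq_sqrt hqp, Real.sq_sqrt hqm] using
      sq_sub_sq_div_le_re_add hε' (Real.sqrt_nonneg qp) hz h4 (abs_sub_le_iff.1 h2).1
        (abs_sub_le_iff.1 h3).2 hsmall h
  · refine (le_or_gt _ _).imp_right fun h => ?_
    have := sq_sub_sq_div_le_re_add (z := -z) hε' (Real.sqrt_nonneg qm) (by rwa [norm_neg]) h4
      (by rw [neg_add_eq_sub, norm_sub_rev]; exact (abs_sub_le_iff.1 h3).1)
      (by rw [← neg_add', norm_neg]; exact (abs_sub_le_iff.1 h2).2) hsmall (by simpa using h)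
    rw [Real.sq_sqrt hqp, Real.sq_sqrt hqm, ← neg_sub, neg_div] at this
    simpa using this

/-- Per-coordinate accuracy bound for the sign-recovering tomography estimator. -/
theorem tomography_coordinate_bound
    (q qp qm : ℝ) (hq : 0 ≤ q) (hqp : 0 ≤ qp) (hqm : 0 ≤ qm)
    (z w : ℂ) (ε' εtsp : ℝ) (hε' : 0 ≤ ε') (htsp : 0 ≤ εtsp)
    (h1 : |Real.sqrt q - ‖z‖| ≤ ε' / 3)
    (h2 : |Real.sqrt qp - ‖z + w‖ / 2| ≤ ε' / 3)
    (h3 : |Real.sqrt qm - ‖z - w‖ / 2| ≤ ε' / 3)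
    (h4 : ‖w - (Real.sqrt q : ℂ)‖ ≤ εtsp)
    (atil : ℝ)
    (hatil : atil =
      if Real.sqrt q ≤ 2 / 3 * ε' + εtsp then 0
      else max (-Real.sqrt q) (min (Real.sqrt q) ((qp - qm) / Real.sqrt q))) :
    |atil - z.re| ≤ ε' + εtsp + |z.im| :=
  tomography_coordinate_bound_general q qp qm hqp hqm z w ε' εtsp hε' h1 h2 h3 h4 atil hatil
end

section
/- Let E be a real inner product space, let c, d ∈ E with ‖d‖ = 1, and let γ be a real number with ‖c − d‖ ≤ γ < 1. Then c ≠ 0 and ‖ (1/‖c‖)·c − d ‖ ≤ √(1+γ) − √(1−γ). -/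
open scoped RealInnerProductSpace

/-- If ‖c − d‖ ≤ γ < 1 and ‖d‖ = 1, then c ≠ 0 and normalizing c moves it at
most √(1+γ) − √(1−γ) away from d. -/
theorem normalize_close_to_unit
    {E : Type*} [NormedAddCommGroup E] [InnerProductSpace ℝ E]
    (c d : E) (hd : ‖d‖ = 1) (γ : ℝ) (hγ : ‖c - d‖ ≤ γ) (hγ1 : γ < 1) :
    c ≠ 0 ∧ ‖(1 / ‖c‖) • c - d‖ ≤ Real.sqrt (1 + γ) - Real.sqrt (1 - γ) := by
  have hγ0 : 0 ≤ γ := le_trans (norm_nonneg _) hγ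
  have hc1 : 1 - γ ≤ ‖c‖ := by
    have h1 := norm_sub_norm_le d c
    rw [hd, norm_sub_rev] at h1
    linarith
  have hcpos : 0 < ‖c‖ := by linarith
  have hc0 : c ≠ 0 := by
    intro h; rw [h, norm_zero] at hcpos; exact lt_irrefl 0 hcpos
  refine ⟨hc0, ?_⟩
  set t := ‖c‖ with ht
  set s := Real.sqrt (1 - γ ^ 2) with hs
  have hs0 : 0 ≤ s := Real.sqrt_nonneg _
  have hs2 : s ^ 2 = 1 - γ ^ 2 := Real.sq_sqrt (by nlinarith)
  have hip : (t ^ 2 + 1 - γ ^ 2) / 2 ≤ ⟪c, d⟫ := by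
    have h1 : ‖c - d‖ ^ 2 ≤ γ ^ 2 := by nlinarith [norm_nonneg (c - d)]
    have h2 : ‖c - d‖ ^ 2 = t ^ 2 - 2 * ⟪c, d⟫ + 1 := by
      rw [norm_sub_sq_real, hd]; ring
    linarith
  have hud : s ≤ (1 / t) * ⟪c, d⟫ := by
    rw [div_mul_eq_mul_div, le_div_iff₀ hcpos]
    nlinarith [sq_nonneg (t - s)]
  have hnsq : ‖(1 / t) • c - d‖ ^ 2 = 2 - 2 * ((1 / t) * ⟪c, d⟫) := by
    rw [norm_sub_sq_real, norm_smul, real_inner_smul_left, hd]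
    rw [Real.norm_eq_abs, abs_of_pos (by positivity : (0:ℝ) < 1 / t)]
    field_simp
    ring
  set A := Real.sqrt (1 + γ) with hA
  set B := Real.sqrt (1 - γ) with hB
  have hA2 : A ^ 2 = 1 + γ := Real.sq_sqrt (by linarith)
  have hB2 : B ^ 2 = 1 - γ := Real.sq_sqrt (by linarith)
  have hAB : A * B = s := by
    rw [hA, hB, hs, ← Real.sqrt_mul (by linarith)]
    ring_nf
  have hABle : B ≤ A := Real.sqrt_le_sqrt (by linarith)
  have hR0 : 0 ≤ A - B := by linarith
  have hsq : ‖(1 / t) • c - d‖ ^ 2 ≤ (A - B) ^ 2 := by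
    rw [hnsq]; nlinarith
  have := Real.sqrt_le_sqrt hsq
  rwa [Real.sqrt_sq (norm_nonneg _), Real.sqrt_sq hR0] at this
end

section
/- For every real x with x² − √3·x − 1 ≥ 0, one has x − √(x² − √3·x − 1) ≤ (√3 + √7)/2; moreover, equality holds at x = (√3 + √7)/2, i.e., the function f(x) = x − √(x² − √3·x − 1) attains its maximum value (√3 + √7)/2 at x = (√3 + √7)/2. -/
/-- The function f(x) = x − √(x² − √3·x − 1), defined where x² − √3·x − 1 ≥ 0,
is bounded above by (√3 + √7)/2, and attains this maximum at x = (√3 + √7)/2. -/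
theorem max_of_x_sub_sqrt :
    (∀ x : ℝ, 0 ≤ x ^ 2 - Real.sqrt 3 * x - 1 →
      x - Real.sqrt (x ^ 2 - Real.sqrt 3 * x - 1)
        ≤ (Real.sqrt 3 + Real.sqrt 7) / 2) ∧
    ((Real.sqrt 3 + Real.sqrt 7) / 2
        - Real.sqrt (((Real.sqrt 3 + Real.sqrt 7) / 2) ^ 2
            - Real.sqrt 3 * ((Real.sqrt 3 + Real.sqrt 7) / 2) - 1)
      = (Real.sqrt 3 + Real.sqrt 7) / 2) := by
  have h3 : Real.sqrt 3 ^ 2 = 3 := Real.sq_sqrt (by norm_num)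
  have h7 : Real.sqrt 7 ^ 2 = 7 := Real.sq_sqrt (by norm_num)
  have h3p : (0:ℝ) ≤ Real.sqrt 3 := Real.sqrt_nonneg 3
  have h7p : (0:ℝ) ≤ Real.sqrt 7 := Real.sqrt_nonneg 7
  have h37 : Real.sqrt 3 ≤ Real.sqrt 7 := Real.sqrt_le_sqrt (by norm_num)
  set M := (Real.sqrt 3 + Real.sqrt 7) / 2 with hM
  have hMroot : M ^ 2 - Real.sqrt 3 * M - 1 = 0 := by
    rw [hM]; nlinarith [h3, h7]
  constructor
  · intro x hx
    rcases le_or_gt x M with h | h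
    · have := Real.sqrt_nonneg (x ^ 2 - Real.sqrt 3 * x - 1)
      linarith
    · have hxM : 0 ≤ x - M := by linarith
      have key : x - M ≤ Real.sqrt (x ^ 2 - Real.sqrt 3 * x - 1) := by
        rw [show x - M = Real.sqrt ((x - M)^2) from (Real.sqrt_sq hxM).symm]
        apply Real.sqrt_le_sqrt
        nlinarith [h3, h7, sq_nonneg (Real.sqrt 3 - Real.sqrt 7)]
      linarith
  · rw [hMroot, Real.sqrt_zero, sub_zero]
end

section
/- Let (x, y, τ, θ, s, κ) be a feasible point for the homogeneous self-dual embedding. Then xᵀs + κ·τ = (r + 1)·θ; that is, the duality gap μ(x, τ, s, κ) := (xᵀs + κτ)/(r+1) of any feasible point equals θ. -/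
open Matrix

/-- In the homogeneous self-dual embedding, the duality gap of any feasible
point equals θ: xᵀs + κτ = (r+1)·θ where r = eᵀe. -/
theorem self_dual_duality_gap_eq_theta
    (N K : ℕ) (A : Matrix (Fin K) (Fin N) ℝ)
    (b : Fin K → ℝ) (c e : Fin N → ℝ)
    (x s : Fin N → ℝ) (y : Fin K → ℝ) (τ θ κ : ℝ)
    (h1 : Aᵀ.mulVec y - τ • c + θ • (c - e) + s = 0)
    (h2 : -(A.mulVec x) + τ • b - θ • (b - A.mulVec e) = 0)
    (h3 : c ⬝ᵥ x - b ⬝ᵥ y - (c ⬝ᵥ e + 1) * θ + κ = 0)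
    (h4 : -((c - e) ⬝ᵥ x) + (b - A.mulVec e) ⬝ᵥ y + (c ⬝ᵥ e + 1) * τ
        = e ⬝ᵥ e + 1) :
    x ⬝ᵥ s + κ * τ = (e ⬝ᵥ e + 1) * θ := by
  have e1 := congrArg (fun v => x ⬝ᵥ v) h1
  have e2 := congrArg (fun v => v ⬝ᵥ y) h2
  simp only [dotProduct_add, dotProduct_sub, dotProduct_smul, add_dotProduct,
    sub_dotProduct, smul_dotProduct, neg_dotProduct, dotProduct_neg,
    dotProduct_zero, zero_dotProduct, smul_eq_mul, Matrix.dotProduct_mulVec,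
    Matrix.vecMul_transpose] at e1 e2 h4
  rw [dotProduct_comm x c, dotProduct_comm x e] at e1
  linear_combination e1 + e2 + τ * h3 + θ * h4
end

section
/- Suppose (Δx, Δy, Δτ, Δθ, Δs, Δκ), with Δx, Δs : Fin N → ℝ, Δy : Fin K → ℝ, and Δτ, Δθ, Δκ : ℝ, satisfies the homogeneous feasibility equations of the self-dual embedding: (1) Aᵀ·Δy − Δτ·c + Δθ·c̄ + Δs = 0; (2) −A·Δx + Δτ·b − Δθ·b̄ = 0; (3) cᵀΔx − bᵀΔy − z̄·Δθ + Δκ = 0; (4) −c̄ᵀΔx + b̄ᵀΔy + z̄·Δτ = 0. Then ΔxᵀΔs + Δτ·Δκ = 0. -/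
open Matrix

/-- Any solution of the homogeneous feasibility equations of the self-dual
embedding satisfies ΔxᵀΔs + Δτ·Δκ = 0. -/
theorem self_dual_null_space_orthogonality
    (N K : ℕ) (A : Matrix (Fin K) (Fin N) ℝ)
    (b : Fin K → ℝ) (c e : Fin N → ℝ)
    (Δx Δs : Fin N → ℝ) (Δy : Fin K → ℝ) (Δτ Δθ Δκ : ℝ)
    (h1 : Aᵀ.mulVec Δy - Δτ • c + Δθ • (c - e) + Δs = 0)
    (h2 : -(A.mulVec Δx) + Δτ • b - Δθ • (b - A.mulVec e) = 0)
    (h3 : c ⬝ᵥ Δx - b ⬝ᵥ Δy - (c ⬝ᵥ e + 1) * Δθ + Δκ = 0)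
    (h4 : -((c - e) ⬝ᵥ Δx) + (b - A.mulVec e) ⬝ᵥ Δy + (c ⬝ᵥ e + 1) * Δτ = 0) :
    Δx ⬝ᵥ Δs + Δτ * Δκ = 0 := by
  have e1 := congrArg (fun v => Δx ⬝ᵥ v) h1
  have e2 := congrArg (fun v => v ⬝ᵥ Δy) h2
  simp only [dotProduct_add, dotProduct_sub, add_dotProduct, sub_dotProduct,
    dotProduct_smul, smul_dotProduct, neg_dotProduct, dotProduct_neg,
    dotProduct_zero, zero_dotProduct, smul_eq_mul] at e1 e2
  have key : Δx ⬝ᵥ Aᵀ.mulVec Δy = A.mulVec Δx ⬝ᵥ Δy := by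
    rw [dotProduct_mulVec, vecMul_transpose]
  rw [key, dotProduct_comm Δx c, dotProduct_comm Δx e] at e1
  simp only [sub_dotProduct] at h4
  linear_combination e1 + e2 + Δτ * h3 + Δθ * h4
end

section
/- Let (x, y, τ, θ, s, κ) be a feasible point for the homogeneous self-dual embedding with θ = ε ≥ 0, τ > 0, and κ ≥ 0. Then: (i) ‖A·(τ⁻¹·x) − b‖ = (ε/τ)·‖b − A·e‖; (ii) ‖Aᵀ·(τ⁻¹·y) + τ⁻¹·s − c‖ = (ε/τ)·‖c − e‖; and (iii) cᵀ(τ⁻¹·x) − bᵀ(τ⁻¹·y) ≤ |cᵀe + 1|·ε/τ, where ‖·‖ denotes the Euclidean norm. -/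
open Matrix

/-- An approximately optimal feasible point of the self-dual embedding with
θ = ε yields, after dividing by τ, a point that is O(ε)-close to feasible and
O(ε)-close to optimal for the original SOCP. -/
theorem self_dual_approx_optimal_point
    (N K : ℕ) (A : Matrix (Fin K) (Fin N) ℝ)
    (b : Fin K → ℝ) (c e : Fin N → ℝ)
    (x s : Fin N → ℝ) (y : Fin K → ℝ) (τ θ κ ε : ℝ)
    (h1 : Aᵀ.mulVec y - τ • c + θ • (c - e) + s = 0)
    (h2 : -(A.mulVec x) + τ • b - θ • (b - A.mulVec e) = 0)
    (h3 : c ⬝ᵥ x - b ⬝ᵥ y - (c ⬝ᵥ e + 1) * θ + κ = 0)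
    (h4 : -((c - e) ⬝ᵥ x) + (b - A.mulVec e) ⬝ᵥ y + (c ⬝ᵥ e + 1) * τ
        = e ⬝ᵥ e + 1)
    (hθ : θ = ε) (hε : 0 ≤ ε) (hτ : 0 < τ) (hκ : 0 ≤ κ) :
    (Real.sqrt (∑ i, (A.mulVec (τ⁻¹ • x) i - b i) ^ 2)
        = (ε / τ) * Real.sqrt (∑ i, (b i - A.mulVec e i) ^ 2)) ∧
    (Real.sqrt (∑ i, (Aᵀ.mulVec (τ⁻¹ • y) i + (τ⁻¹ • s) i - c i) ^ 2)
        = (ε / τ) * Real.sqrt (∑ i, (c i - e i) ^ 2)) ∧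
    (c ⬝ᵥ (τ⁻¹ • x) - b ⬝ᵥ (τ⁻¹ • y) ≤ |c ⬝ᵥ e + 1| * ε / τ) := by
  subst hθ
  have hτ' : τ ≠ 0 := ne_of_gt hτ
  have hratio : 0 ≤ θ / τ := div_nonneg hε hτ.le
  refine ⟨?_, ?_, ?_⟩
  · have key : ∀ i, A.mulVec (τ⁻¹ • x) i - b i = -(θ / τ) * (b i - A.mulVec e i) := by
      intro i
      have h := congrFun h2 i
      simp only [Pi.add_apply, Pi.sub_apply, Pi.neg_apply, Pi.smul_apply, smul_eq_mul,
        Pi.zero_apply] at h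
      rw [Matrix.mulVec_smul]
      simp only [Pi.smul_apply, smul_eq_mul]
      field_simp
      ring_nf
      ring_nf at h
      linarith
    calc Real.sqrt (∑ i, (A.mulVec (τ⁻¹ • x) i - b i) ^ 2)
        = Real.sqrt ((θ / τ) ^ 2 * ∑ i, (b i - A.mulVec e i) ^ 2) := by
          rw [Finset.mul_sum]; congr 1; apply Finset.sum_congr rfl
          intro i _; rw [key i]; ring
      _ = (θ / τ) * Real.sqrt (∑ i, (b i - A.mulVec e i) ^ 2) := by
          rw [Real.sqrt_mul (sq_nonneg _), Real.sqrt_sq hratio]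
  · have key : ∀ i, Aᵀ.mulVec (τ⁻¹ • y) i + (τ⁻¹ • s) i - c i
        = -(θ / τ) * (c i - e i) := by
      intro i
      have h := congrFun h1 i
      simp only [Pi.add_apply, Pi.sub_apply, Pi.smul_apply, smul_eq_mul,
        Pi.zero_apply] at h
      rw [Matrix.mulVec_smul]
      simp only [Pi.smul_apply, smul_eq_mul]
      field_simp
      ring_nf
      ring_nf at h
      linarith
    calc Real.sqrt (∑ i, (Aᵀ.mulVec (τ⁻¹ • y) i + (τ⁻¹ • s) i - c i) ^ 2)
        = Real.sqrt ((θ / τ) ^ 2 * ∑ i, (c i - e i) ^ 2) := by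
          rw [Finset.mul_sum]; congr 1; apply Finset.sum_congr rfl
          intro i _; rw [key i]; ring
      _ = (θ / τ) * Real.sqrt (∑ i, (c i - e i) ^ 2) := by
          rw [Real.sqrt_mul (sq_nonneg _), Real.sqrt_sq hratio]
  · have hdx : c ⬝ᵥ (τ⁻¹ • x) = τ⁻¹ * (c ⬝ᵥ x) := by
      rw [dotProduct_smul]; simp [smul_eq_mul]
    have hdy : b ⬝ᵥ (τ⁻¹ • y) = τ⁻¹ * (b ⬝ᵥ y) := by
      rw [dotProduct_smul]; simp [smul_eq_mul]
    rw [hdx, hdy]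
    have hgap : c ⬝ᵥ x - b ⬝ᵥ y ≤ |c ⬝ᵥ e + 1| * θ := by
      have : c ⬝ᵥ x - b ⬝ᵥ y = (c ⬝ᵥ e + 1) * θ - κ := by linarith
      rw [this]
      have := mul_le_mul_of_nonneg_right (le_abs_self (c ⬝ᵥ e + 1)) hε
      linarith
    have h5 := mul_le_mul_of_nonneg_right hgap (inv_nonneg.mpr hτ.le)
    calc τ⁻¹ * (c ⬝ᵥ x) - τ⁻¹ * (b ⬝ᵥ y) = (c ⬝ᵥ x - b ⬝ᵥ y) * τ⁻¹ := by ring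
      _ ≤ (|c ⬝ᵥ e + 1| * θ) * τ⁻¹ := h5
      _ = |c ⬝ᵥ e + 1| * θ / τ := by rw [div_eq_mul_inv]
end

section
/- Let (x, y, τ, θ, s, κ) be a feasible point for the homogeneous self-dual embedding, let σ ∈ ℝ, and let μ = (xᵀs + κτ)/(r+1). Suppose (Δx, Δy, Δτ, Δθ, Δs, Δκ) satisfies the homogeneous feasibility equations ((1) Aᵀ·Δy − Δτ·c + Δθ·c̄ + Δs = 0; (2) −A·Δx + Δτ·b − Δθ·b̄ = 0; (3) cᵀΔx − bᵀΔy − z̄·Δθ + Δκ = 0; (4) −c̄ᵀΔx + b̄ᵀΔy + z̄·Δτ = 0) together with the contracted Newton centrality conditions sᵀΔx + xᵀΔs = σ·μ·r − xᵀs and κ·Δτ + τ·Δκ = σ·μ − κ·τ. Then the updated point (x+Δx, y+Δy, τ+Δτ, θ+Δθ, s+Δs, κ+Δκ) is again feasible for the homogeneous self-dual embedding, and its duality gap is exactly σ·μ: (x+Δx)ᵀ(s+Δs) + (κ+Δκ)(τ+Δτ) = σ·μ·(r+1). -/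
open Matrix

/-- A Newton step computed from the homogeneous feasibility equations and the
contracted centrality conditions keeps the point feasible for the self-dual
embedding and reduces the duality gap exactly by the factor σ. -/
theorem newton_step_feasible_and_gap
    (N K : ℕ) (A : Matrix (Fin K) (Fin N) ℝ)
    (b : Fin K → ℝ) (c e : Fin N → ℝ)
    (x s : Fin N → ℝ) (y : Fin K → ℝ) (τ θ κ : ℝ)
    (σ μ : ℝ)
    (hμ : μ = (x ⬝ᵥ s + κ * τ) / (e ⬝ᵥ e + 1))
    (hf1 : Aᵀ.mulVec y - τ • c + θ • (c - e) + s = 0)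
    (hf2 : -(A.mulVec x) + τ • b - θ • (b - A.mulVec e) = 0)
    (hf3 : c ⬝ᵥ x - b ⬝ᵥ y - (c ⬝ᵥ e + 1) * θ + κ = 0)
    (hf4 : -((c - e) ⬝ᵥ x) + (b - A.mulVec e) ⬝ᵥ y + (c ⬝ᵥ e + 1) * τ
        = e ⬝ᵥ e + 1)
    (Δx Δs : Fin N → ℝ) (Δy : Fin K → ℝ) (Δτ Δθ Δκ : ℝ)
    (hn1 : Aᵀ.mulVec Δy - Δτ • c + Δθ • (c - e) + Δs = 0)
    (hn2 : -(A.mulVec Δx) + Δτ • b - Δθ • (b - A.mulVec e) = 0)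
    (hn3 : c ⬝ᵥ Δx - b ⬝ᵥ Δy - (c ⬝ᵥ e + 1) * Δθ + Δκ = 0)
    (hn4 : -((c - e) ⬝ᵥ Δx) + (b - A.mulVec e) ⬝ᵥ Δy + (c ⬝ᵥ e + 1) * Δτ = 0)
    (hc1 : s ⬝ᵥ Δx + x ⬝ᵥ Δs = σ * μ * (e ⬝ᵥ e) - x ⬝ᵥ s)
    (hc2 : κ * Δτ + τ * Δκ = σ * μ - κ * τ) :
    (Aᵀ.mulVec (y + Δy) - (τ + Δτ) • c + (θ + Δθ) • (c - e) + (s + Δs) = 0) ∧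
    (-(A.mulVec (x + Δx)) + (τ + Δτ) • b - (θ + Δθ) • (b - A.mulVec e) = 0) ∧
    (c ⬝ᵥ (x + Δx) - b ⬝ᵥ (y + Δy) - (c ⬝ᵥ e + 1) * (θ + Δθ) + (κ + Δκ) = 0) ∧
    (-((c - e) ⬝ᵥ (x + Δx)) + (b - A.mulVec e) ⬝ᵥ (y + Δy)
        + (c ⬝ᵥ e + 1) * (τ + Δτ) = e ⬝ᵥ e + 1) ∧
    ((x + Δx) ⬝ᵥ (s + Δs) + (κ + Δκ) * (τ + Δτ) = σ * μ * (e ⬝ᵥ e + 1)) := by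
  
  -- orthogonality
  have h1 := congrArg (fun v => Δx ⬝ᵥ v) hn1
  have h2 := congrArg (fun v => v ⬝ᵥ Δy) hn2
  simp only [dotProduct_add, add_dotProduct, dotProduct_sub, sub_dotProduct,
    dotProduct_smul, smul_dotProduct, neg_dotProduct, dotProduct_neg,
    smul_eq_mul, dotProduct_zero, zero_dotProduct] at h1 h2
  rw [show Δx ⬝ᵥ Aᵀ.mulVec Δy = A.mulVec Δx ⬝ᵥ Δy from by
    rw [Matrix.dotProduct_mulVec, Matrix.vecMul_transpose, dotProduct_comm],
    dotProduct_comm Δx c, dotProduct_comm Δx e] at h1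
  simp only [dotProduct_sub, sub_dotProduct] at hn3 hn4 hf3 hf4
  have horth : Δx ⬝ᵥ Δs + Δτ * Δκ = 0 := by
    linear_combination h1 + h2 + Δτ * hn3 + Δθ * hn4
  refine ⟨?_, ?_, ?_, ?_, ?_⟩
  · rw [mulVec_add]
    linear_combination (norm := module) hf1 + hn1
  · rw [mulVec_add]
    linear_combination (norm := module) hf2 + hn2
  · simp only [dotProduct_add, add_dotProduct]
    linarith [hf3, hn3]
  · simp only [dotProduct_add, add_dotProduct, dotProduct_sub, sub_dotProduct]
    linarith [hf4, hn4]
  · simp only [dotProduct_add, add_dotProduct]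
    linear_combination hc1 + hc2 + horth + dotProduct_comm Δx s
end
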